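/- arXiv:2405.19547 — 2 statements merged into one kernel-verified Lean document; each statement's English description precedes it below -/
import Mathlib

section
/- Let n ≥ 2, let G_v, G_l ∈ ℝ^{d×r}, and let x_1^v,…,x_n^v and x_1^l,…,x_n^l be vectors in ℝ^d. Define s_{ij} = ⟨G_v^⊤ x_i^v, G_l^⊤ x_j^l⟩, the means x̄^v = (1/n)Σ_{i=1}^n x_i^v and x̄^l = (1/n)Σ_{i=1}^n x_i^l, and the matrix Γ = (1/(n−1)) Σ_{i=1}^n x_i^v (x_i^l)^⊤ − (n/(n−1)) x̄^v (x̄^l)^⊤. Then ( Σ_{i=1}^n Σ_{j=1}^n (s_{ij} − s_{ii}) ) / (n(n−1)) = −Tr( G_v^⊤ Γ G_l ). Consequently, the regularized linear contrastive objective L(G_v,G_l) = ( Σ_{i,j} (s_{ij} − s_{ii}) )/(n(n−1)) + (ρ/2)·(n/(n−1))·‖G_v G_l^⊤‖_F² equals −Tr(G_v^⊤ Γ G_l) + (ρ/2)·(n/(n−1))·‖G_v G_l^⊤‖_F². -/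
open scoped BigOperators
open Matrix

/-! Since `Tr(Gvᵀ (a bᵀ) Gl) = ⟨Gvᵀ a, Glᵀ b⟩`, bilinearity gives
`Tr(Gvᵀ Γ Gl) = (∑ᵢ sᵢᵢ) / (n - 1) - (∑ᵢⱼ sᵢⱼ) / (n (n - 1))`,
which is minus the averaged sum of `sᵢⱼ - sᵢᵢ`. -/

section TraceForm

variable {R ι m m' k : Type*} [CommSemiring R] [Fintype ι] [Fintype m] [Fintype m'] [Fintype k]

theorem Matrix.trace_transpose_mul_vecMulVec_mul (A : Matrix m k R) (B : Matrix m' k R)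
    (a : m → R) (b : m' → R) :
    trace (Aᵀ * vecMulVec a b * B) = (Aᵀ *ᵥ a) ⬝ᵥ (Bᵀ *ᵥ b) := by
  rw [mul_vecMulVec, vecMulVec_mul, trace_vecMulVec, ← mulVec_transpose]

theorem Matrix.trace_transpose_mul_sum_vecMulVec_mul (A : Matrix m k R) (B : Matrix m' k R)
    (u : ι → m → R) (v : ι → m' → R) :
    trace (Aᵀ * (∑ i, vecMulVec (u i) (v i)) * B) = ∑ i, (Aᵀ *ᵥ u i) ⬝ᵥ (Bᵀ *ᵥ v i) := by
  simp only [Matrix.mul_sum, Matrix.sum_mul, trace_sum, trace_transpose_mul_vecMulVec_mul]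

theorem Matrix.mulVec_sum_dotProduct_mulVec_sum (A : Matrix m k R) (B : Matrix m' k R)
    (u : ι → m → R) (v : ι → m' → R) :
    (Aᵀ *ᵥ ∑ i, u i) ⬝ᵥ (Bᵀ *ᵥ ∑ j, v j) = ∑ i, ∑ j, (Aᵀ *ᵥ u i) ⬝ᵥ (Bᵀ *ᵥ v j) := by
  rw [mulVec_sum, mulVec_sum, sum_dotProduct]
  simp only [dotProduct_sum]

end TraceForm

theorem Finset.sum_sum_sub_diag {ι R : Type*} [Fintype ι] [CommRing R] (s : ι → ι → R) :
    ∑ i, ∑ j, (s i j - s i i) = ∑ i, ∑ j, s i j - Fintype.card ι * ∑ i, s i i := by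
  simp only [Finset.sum_sub_distrib, Finset.sum_const, Finset.card_univ, nsmul_eq_mul,
    Finset.mul_sum]

/-- The (unregularized) linear contrastive objective equals `-Tr(Gvᵀ Γ Gl)`,
and hence the regularized objective equals `-Tr(Gvᵀ Γ Gl)` plus the regularizer.
Here Frobenius norm squared is expressed as `Tr(AᵀA)`. -/
theorem contrastive_objective_eq_neg_trace
    (n d r : ℕ) (hn : 2 ≤ n) (ρ : ℝ)
    (Gv Gl : Matrix (Fin d) (Fin r) ℝ)
    (xv xl : Fin n → Fin d → ℝ)
    (s : Fin n → Fin n → ℝ)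
    (hs : ∀ i j, s i j = dotProduct (Gv.transpose.mulVec (xv i)) (Gl.transpose.mulVec (xl j)))
    (xbarv xbarl : Fin d → ℝ)
    (hxbarv : xbarv = (1 / (n : ℝ)) • ∑ i, xv i)
    (hxbarl : xbarl = (1 / (n : ℝ)) • ∑ i, xl i)
    (Γ : Matrix (Fin d) (Fin d) ℝ)
    (hΓ : Γ = (1 / ((n : ℝ) - 1)) • ∑ i, Matrix.vecMulVec (xv i) (xl i)
        - ((n : ℝ) / ((n : ℝ) - 1)) • Matrix.vecMulVec xbarv xbarl) :
    (∑ i, ∑ j, (s i j - s i i)) / ((n : ℝ) * ((n : ℝ) - 1))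
      = - Matrix.trace (Gv.transpose * Γ * Gl)
    ∧ (∑ i, ∑ j, (s i j - s i i)) / ((n : ℝ) * ((n : ℝ) - 1))
        + (ρ / 2) * ((n : ℝ) / ((n : ℝ) - 1))
            * Matrix.trace ((Gv * Gl.transpose).transpose * (Gv * Gl.transpose))
      = - Matrix.trace (Gv.transpose * Γ * Gl)
        + (ρ / 2) * ((n : ℝ) / ((n : ℝ) - 1))
            * Matrix.trace ((Gv * Gl.transpose).transpose * (Gv * Gl.transpose)) := by
  have hn0 : (n : ℝ) ≠ 0 := by positivity
  have hn1 : (n : ℝ) - 1 ≠ 0 := by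
    have : (2 : ℝ) ≤ n := by exact_mod_cast hn
    linarith
  have htrace : trace (Gvᵀ * Γ * Gl) = 1 / ((n : ℝ) - 1) * ∑ i, s i i
      - n / ((n : ℝ) - 1) * (1 / n * (1 / n * ∑ i, ∑ j, s i j)) := by
    simp only [hΓ, hxbarv, hxbarl, Matrix.mul_sub, Matrix.sub_mul, trace_sub, Matrix.mul_smul,
      Matrix.smul_mul, trace_smul, smul_vecMulVec, vecMulVec_smul,
      trace_transpose_mul_sum_vecMulVec_mul, trace_transpose_mul_vecMulVec_mul,
      mulVec_sum_dotProduct_mulVec_sum, ← hs, smul_eq_mul]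
  have hobjective : (∑ i, ∑ j, (s i j - s i i)) / ((n : ℝ) * ((n : ℝ) - 1))
      = - trace (Gvᵀ * Γ * Gl) := by
    rw [htrace, Finset.sum_sum_sub_diag, Fintype.card_fin]
    field_simp
    ring
  exact ⟨hobjective, by rw [hobjective]⟩
end

section
/- Let z_1^v,…,z_n^v and z_1^l,…,z_n^l be unit vectors in ℝ^d (‖z_i^v‖ = ‖z_i^l‖ = 1 for all i). Then (1/n)·‖ Σ_{i=1}^n z_i^v (z_i^v)^⊤ − Σ_{i=1}^n z_i^v (z_i^l)^⊤ ‖_F ≤ √( 2·( 1 − (1/n) Σ_{i=1}^n ⟨z_i^v, z_i^l⟩ ) ). In particular, the error incurred by using the vision-only empirical covariance Σ_i z_i^v (z_i^v)^⊤ as a proxy for the vision–language empirical cross-covariance Σ_i z_i^v (z_i^l)^⊤ is controlled by the average alignment (1/n)Σ_i ⟨z_i^v, z_i^l⟩ between the visual and language latent vectors. -/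
/-!
Writing the error as `∑ᵢ zᵥᵢ (zᵥᵢ - zₗᵢ)ᵀ`, each rank-one term has Frobenius norm at most
`‖zᵥᵢ‖ ‖zᵥᵢ - zₗᵢ‖ = ‖zᵥᵢ - zₗᵢ‖` by submultiplicativity. The mean of these distances is at most
their quadratic mean, and for unit vectors `‖u - v‖² = 2 (1 - ⟪u, v⟫)`.
-/

open Matrix Finset
open scoped RealInnerProductSpace Matrix.Norms.Frobenius

namespace Matrix

variable {ι m n 𝕜 : Type*} [Fintype m] [Fintype n]

theorem frobenius_norm_eq_sqrt_sum_sq (A : Matrix m n ℝ) :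
    ‖A‖ = √(∑ i, ∑ j, A i j ^ 2) := by
  simp [frobenius_norm_def, Real.sqrt_eq_rpow]

theorem frobenius_norm_vecMulVec_le [RCLike 𝕜] (u : m → 𝕜) (w : n → 𝕜) :
    ‖vecMulVec u w‖ ≤ ‖WithLp.toLp 2 u‖ * ‖WithLp.toLp 2 w‖ := by
  rw [vecMulVec_eq (Fin 1), ← frobenius_norm_replicateCol (ι := Fin 1),
    ← frobenius_norm_replicateRow (ι := Fin 1)]
  exact frobenius_norm_mul _ _

theorem frobenius_norm_sum_vecMulVec_le [RCLike 𝕜] (s : Finset ι) (u : ι → m → 𝕜)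
    (w : ι → n → 𝕜) :
    ‖∑ i ∈ s, vecMulVec (u i) (w i)‖ ≤ ∑ i ∈ s, ‖WithLp.toLp 2 (u i)‖ * ‖WithLp.toLp 2 (w i)‖ :=
  (norm_sum_le _ _).trans (sum_le_sum fun i _ => frobenius_norm_vecMulVec_le (u i) (w i))

end Matrix

theorem sum_div_card_le_sqrt_sum_sq_div_card {ι : Type*} (s : Finset ι) (f : ι → ℝ) :
    (∑ i ∈ s, f i) / #s ≤ √((∑ i ∈ s, f i ^ 2) / #s) :=
  (le_abs_self _).trans (Real.abs_le_sqrt sum_div_card_sq_le_sum_sq_div_card)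

theorem sum_norm_sub_sq_eq_of_norm_eq_one {ι E : Type*} [NormedAddCommGroup E]
    [InnerProductSpace ℝ E] (s : Finset ι) {u v : ι → E} (hu : ∀ i, ‖u i‖ = 1)
    (hv : ∀ i, ‖v i‖ = 1) :
    ∑ i ∈ s, ‖u i - v i‖ ^ 2 = 2 * (#s - ∑ i ∈ s, ⟪u i, v i⟫) := by
  simp only [norm_sub_sq_real, hu, hv, one_pow, sum_sub_distrib, sum_add_distrib, ← mul_sum,
    sum_const, nsmul_eq_mul, mul_one]
  ring

theorem vision_only_proxy_error_bound_general
    (n d : ℕ)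
    (zv zl : Fin n → EuclideanSpace ℝ (Fin d))
    (hzv : ∀ i, ‖zv i‖ = 1) (hzl : ∀ i, ‖zl i‖ = 1) :
    (1 / (n : ℝ)) * Real.sqrt (∑ j : Fin d, ∑ k : Fin d,
        ((∑ i, Matrix.vecMulVec (fun a => zv i a) (fun a => zv i a)
          - ∑ i, Matrix.vecMulVec (fun a => zv i a) (fun a => zl i a)) j k) ^ 2)
      ≤ Real.sqrt (2 * (1 - (1 / (n : ℝ)) * ∑ i, ⟪zv i, zl i⟫)) := by
  rw [← frobenius_norm_eq_sqrt_sum_sq, ← sum_sub_distrib]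
  simp only [← vecMulVec_sub]
  calc 1 / (n : ℝ) * ‖∑ i, vecMulVec (fun a => zv i a) (fun a => zv i a - zl i a)‖
      ≤ (∑ i, ‖zv i - zl i‖) / #(univ : Finset (Fin n)) := by
        rw [card_univ, Fintype.card_fin, one_div_mul_eq_div]
        gcongr
        refine (frobenius_norm_sum_vecMulVec_le univ (fun i a => zv i a)
          (fun i a => zv i a - zl i a)).trans_eq (sum_congr rfl fun i _ => ?_)
        change ‖zv i‖ * ‖zv i - zl i‖ = _
        rw [hzv, one_mul]
    _ ≤ √((∑ i, ‖zv i - zl i‖ ^ 2) / #(univ : Finset (Fin n))) :=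
        sum_div_card_le_sqrt_sum_sq_div_card _ _
    _ ≤ Real.sqrt (2 * (1 - (1 / (n : ℝ)) * ∑ i, ⟪zv i, zl i⟫)) := by
        gcongr
        rw [sum_norm_sub_sq_eq_of_norm_eq_one _ hzv hzl, card_univ, Fintype.card_fin,
          mul_div_assoc, sub_div, one_div_mul_eq_div]
        gcongr
        -- `n / n ≤ 1` rather than `= 1`: this also covers `n = 0`, where `n / n = 0`.
        exact div_self_le_one _

/-- The Frobenius-norm error of using the vision-only empirical covariance as a
proxy for the vision–language cross-covariance is controlled by the average
alignment between the visual and language latent unit vectors. -/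
theorem vision_only_proxy_error_bound
    (n d : ℕ) (hn : 1 ≤ n)
    (zv zl : Fin n → EuclideanSpace ℝ (Fin d))
    (hzv : ∀ i, ‖zv i‖ = 1) (hzl : ∀ i, ‖zl i‖ = 1) :
    (1 / (n : ℝ)) * Real.sqrt (∑ j : Fin d, ∑ k : Fin d,
        ((∑ i, Matrix.vecMulVec (fun a => zv i a) (fun a => zv i a)
          - ∑ i, Matrix.vecMulVec (fun a => zv i a) (fun a => zl i a)) j k) ^ 2)
      ≤ Real.sqrt (2 * (1 - (1 / (n : ℝ)) * ∑ i, ⟪zv i, zl i⟫)) :=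
  vision_only_proxy_error_bound_general n d zv zl hzv hzl
end
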